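/- arXiv:1201.1965 — 7 statements merged into one kernel-verified Lean document; each statement's English description precedes it below -/
import Mathlib

section
/- If f : X → Y is a quotient map, Y is Hausdorff, X is second countable, and Y is second countable, then f is a bi-quotient map (i.e., for every y ∈ Y and every covering 𝒰 of f⁻¹(y) by open subsets of X, finitely many images f(U), U ∈ 𝒰, cover some neighborhood of y in Y). -/
/-- A map `f : X → Y` is a bi-quotient map if, whenever `y ∈ Y` and `𝒰` is a covering of
`f⁻¹(y)` by open subsets of `X`, then finitely many `f(U)`, `U ∈ 𝒰`, cover some
neighborhood of `y` in `Y`. -/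
def IsBiQuotient {X Y : Type*} [TopologicalSpace X] [TopologicalSpace Y] (f : X → Y) : Prop :=
  ∀ y : Y, ∀ 𝒰 : Set (Set X), (∀ U ∈ 𝒰, IsOpen U) → f ⁻¹' {y} ⊆ ⋃₀ 𝒰 →
    ∃ F : Finset (Set X), ↑F ⊆ 𝒰 ∧ (⋃ U ∈ F, f '' U) ∈ nhds y

theorem stmt_0 {X Y : Type*} [TopologicalSpace X] [TopologicalSpace Y]
    [T2Space Y] [SecondCountableTopology X]
    [SecondCountableTopology Y]
    (f : X → Y) (hf : Topology.IsQuotientMap f) : IsBiQuotient f := by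
  classical
  intro y 𝒰 hopen hcov
  by_contra hcon
  push_neg at hcon
  -- countable subcover
  obtain ⟨T, hTc, hT𝒰, hTU⟩ := TopologicalSpace.isOpen_sUnion_countable 𝒰 hopen
  have hcovT : f ⁻¹' {y} ⊆ ⋃₀ T := hTU ▸ hcov
  -- fiber nonempty
  obtain ⟨x0, hx0⟩ := hf.surjective y
  have hx0fib : x0 ∈ f ⁻¹' {y} := hx0
  have hTne : T.Nonempty := by
    obtain ⟨U, hU, -⟩ := hcovT hx0fib
    exact ⟨U, hU⟩
  obtain ⟨g, hg⟩ := hTc.exists_eq_range hTne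
  -- antitone basis of nhds y
  obtain ⟨B, hB⟩ := (nhds y).exists_antitone_basis
  -- choose the sequence
  have hchoice : ∀ n : ℕ, ∃ z ∈ B n, ∀ i ≤ n, z ∉ f '' g i := by
    intro n
    have hF : ¬ (⋃ U ∈ ((Finset.range (n+1)).image g), f '' U) ∈ nhds y := by
      apply hcon
      intro U hU
      simp only [Finset.coe_image, Set.mem_image, Finset.mem_coe] at hU
      obtain ⟨i, -, rfl⟩ := hU
      exact hT𝒰 (hg ▸ ⟨i, rfl⟩)
    by_contra hc
    push_neg at hc
    apply hF
    apply Filter.mem_of_superset (hB.mem n)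
    intro z hz
    obtain ⟨i, hi, hzi⟩ := hc z hz
    simp only [Set.mem_iUnion]
    exact ⟨g i, Finset.mem_image_of_mem g (Finset.mem_range.mpr (Nat.lt_succ_of_le hi)), hzi⟩
  choose yn hynB hynU using hchoice
  have htend : Filter.Tendsto yn Filter.atTop (nhds y) := hB.tendsto hynB
  -- the bad set
  set D : Set Y := Set.range yn \ {y} with hD
  have hK : IsCompact (insert y (Set.range yn)) := htend.isCompact_insert_range
  have hKclosed : IsClosed (insert y (Set.range yn)) := hK.isClosed
  -- preimage of Dᶜ is open
  have hpre : IsOpen (f ⁻¹' Dᶜ) := by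
    rw [isOpen_iff_mem_nhds]
    intro x hx
    by_cases hxy : f x = y
    · -- x in fiber, use a member of the cover
      obtain ⟨U, hUT, hxU⟩ := hcovT (show x ∈ f ⁻¹' {y} from hxy)
      obtain ⟨m, rfl⟩ := hg ▸ hUT
      -- finite set to remove
      have hfin : Set.Finite ((yn '' {i | i ≤ m}) \ {y}) :=
        ((Set.finite_Iic m).image yn).diff
      have hclosed : IsClosed ((yn '' {i | i ≤ m}) \ {y}) := hfin.isClosed
      have hopenN : IsOpen (g m ∩ f ⁻¹' ((yn '' {i | i ≤ m}) \ {y})ᶜ) :=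
        (hopen _ (hT𝒰 (hg ▸ ⟨m, rfl⟩))).inter (hclosed.isOpen_compl.preimage hf.continuous)
      apply Filter.mem_of_superset (hopenN.mem_nhds ?_)
      · rintro z ⟨hzU, hzF⟩
        intro hzD
        obtain ⟨⟨n, hn⟩, hzny⟩ := hzD
        rcases le_or_gt n m with h | h
        · exact hzF ⟨⟨n, h, hn⟩, hzny⟩
        · exact hynU n m h.le (hn ▸ ⟨z, hzU, rfl⟩)
      · exact ⟨hxU, fun hmem => hmem.2 hxy⟩
    · have hfxK : f x ∉ insert y (Set.range yn) := by
        intro hmem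
        rcases hmem with h1 | h2
        · exact hxy h1
        · exact hx ⟨h2, hxy⟩
      exact Filter.mem_of_superset
        ((hKclosed.isOpen_compl.preimage hf.continuous).mem_nhds hfxK)
        (fun z hz hzD => hz (Set.mem_insert_iff.mpr (Or.inr hzD.1)))
  have hDopen : IsOpen Dᶜ := hf.isOpen_preimage.mp hpre
  have hmem : Dᶜ ∈ nhds y := hDopen.mem_nhds (by intro hyD; exact hyD.2 rfl)
  -- eventually yn ∉ D, i.e. yn = y
  have hev : ∀ᶠ n in Filter.atTop, yn n ∈ Dᶜ := htend.eventually_mem hmem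
  -- but yn n ≠ y for large n
  obtain ⟨U0, hU0T, hx0U⟩ := hcovT hx0fib
  obtain ⟨k, rfl⟩ := hg ▸ hU0T
  obtain ⟨n, hn, hnD⟩ := (hev.and (Filter.eventually_ge_atTop k)).exists
  apply hn ⟨⟨n, rfl⟩, ?_⟩
  intro hny
  exact hynU n k hnD (hny ▸ ⟨x0, hx0U, hx0⟩)
end

section
/- A finite (or arbitrary) product of bi-quotient maps is a bi-quotient map; in particular, if f₁ : X₁ → Y₁ and f₂ : X₂ → Y₂ are bi-quotient, then f₁ × f₂ : X₁ × X₂ → Y₁ × Y₂ is bi-quotient. -/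
open Filter Set Topology

/-- Ultrafilter characterization: every convergent ultrafilter downstairs lifts to a
convergent ultrafilter upstairs. -/
def LiftsUltra {X Y : Type*} [TopologicalSpace X] [TopologicalSpace Y] (f : X → Y) : Prop :=
  ∀ (g : Ultrafilter Y) (y : Y), ↑g ≤ 𝓝 y →
    ∃ x, f x = y ∧ ∃ u : Ultrafilter X, ↑u ≤ 𝓝 x ∧ Ultrafilter.map f u = g

section Equiv
variable {X Y : Type*} [TopologicalSpace X] [TopologicalSpace Y] {f : X → Y}

theorem LiftsUltra.surjective (hf : LiftsUltra f) : Function.Surjective f := fun y => by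
  obtain ⟨x, hx, -⟩ := hf (pure y) y (pure_le_nhds y)
  exact ⟨x, hx⟩

theorem liftsUltra_of_isBiQuotient (hf : IsBiQuotient f) : LiftsUltra f := by
  intro g y hg
  by_contra hcon
  push_neg at hcon
  set 𝒰 : Set (Set X) := {U | IsOpen U ∧ f '' U ∉ g} with h𝒰
  have hcov : f ⁻¹' {y} ⊆ ⋃₀ 𝒰 := by
    intro x hx
    have hx' : f x = y := hx
    have hbot : 𝓝 x ⊓ comap f ↑g = ⊥ := by
      by_contra hne
      have hne' : NeBot (𝓝 x ⊓ comap f ↑g) := ⟨hne⟩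
      obtain ⟨u, hu⟩ := Ultrafilter.exists_le (𝓝 x ⊓ comap f ↑g)
      have hu1 : ↑u ≤ 𝓝 x := hu.trans inf_le_left
      have hu2 : map f ↑u ≤ ↑g := map_le_iff_le_comap.2 (hu.trans inf_le_right)
      have : Ultrafilter.map f u = g := by
        apply Ultrafilter.coe_injective
        exact g.unique hu2
      exact hcon x hx' u hu1 this
    rw [inf_eq_bot_iff] at hbot
    obtain ⟨U, hU, V, hV, hUV⟩ := hbot
    obtain ⟨O, hOU, hOopen, hxO⟩ := mem_nhds_iff.1 hU
    obtain ⟨A, hA, hAV⟩ := hV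
    have hdisj : f '' O ∩ A = ∅ := by
      ext z
      simp only [Set.mem_inter_iff, Set.mem_empty_iff_false, iff_false, not_and]
      rintro ⟨w, hwO, rfl⟩ hzA
      have : w ∈ U ∩ V := ⟨hOU hwO, hAV hzA⟩
      rw [hUV] at this
      exact this
    have hnot : f '' O ∉ g := by
      intro hmem
      have := g.nonempty_of_mem (inter_mem hmem hA)
      rw [hdisj] at this
      exact Set.not_nonempty_empty this
    exact ⟨O, ⟨hOopen, hnot⟩, hxO⟩
  obtain ⟨F, hF𝒰, hFnhds⟩ := hf y 𝒰 (fun U hU => hU.1) hcov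
  have hFg : (⋃ U ∈ F, f '' U) ∈ g := hg hFnhds
  obtain ⟨U, hUF, hUg⟩ := (Ultrafilter.finite_biUnion_mem_iff F.finite_toSet).1 hFg
  exact (hF𝒰 hUF).2 hUg

theorem isBiQuotient_of_liftsUltra (hf : LiftsUltra f) : IsBiQuotient f := by
  classical
  intro y 𝒰 hopen hcov
  by_contra hcon
  push_neg at hcon
  have hG : (𝓝 y ⊓ ⨅ U : 𝒰, 𝓟 ((f '' (U : Set X))ᶜ)).NeBot := by
    refine ⟨fun hbot => ?_⟩
    have hemp : (∅ : Set Y) ∈ 𝓝 y ⊓ ⨅ U : 𝒰, 𝓟 ((f '' (U : Set X))ᶜ) := by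
      rw [hbot]; exact mem_bot
    rw [mem_inf_iff] at hemp
    obtain ⟨V, hV, W, hW, hVW⟩ := hemp
    rw [Filter.mem_iInf] at hW
    obtain ⟨I, hIfin, V', hV', hWeq⟩ := hW
    have : ∃ F : Finset (Set X), ↑F ⊆ 𝒰 ∧ (⋃ U ∈ F, f '' U) ∈ 𝓝 y := by
      have := hIfin.fintype
      refine ⟨hIfin.toFinset.image Subtype.val, ?_, ?_⟩
      · intro U hU
        simp only [Finset.mem_coe, Finset.mem_image] at hU
        obtain ⟨u, -, rfl⟩ := hU
        exact u.2
      · apply mem_of_superset hV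
        intro v hv
        have hvW : v ∉ W := by
          intro hvW
          have : v ∈ V ∩ W := ⟨hv, hvW⟩
          rw [← hVW] at this
          exact this
        rw [hWeq] at hvW
        simp only [Set.mem_iInter, not_forall] at hvW
        obtain ⟨i, hi⟩ := hvW
        have hvi : v ∈ f '' ((i : 𝒰) : Set X) := by
          by_contra hni
          exact hi ((hV' i) hni)
        exact Set.mem_biUnion
          (Finset.mem_image.2 ⟨i.1, hIfin.mem_toFinset.2 i.2, rfl⟩) hvi
    obtain ⟨F, h1, h2⟩ := this
    exact hcon F h1 h2
  obtain ⟨g, hg⟩ := Ultrafilter.exists_le (𝓝 y ⊓ ⨅ U : 𝒰, 𝓟 ((f '' (U : Set X))ᶜ))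
  have hgy : ↑g ≤ 𝓝 y := hg.trans inf_le_left
  have hgU : ∀ U ∈ 𝒰, f '' U ∉ g := by
    intro U hU hmem
    have hle : ↑g ≤ 𝓟 ((f '' U)ᶜ) :=
      hg.trans (inf_le_right.trans (iInf_le _ (⟨U, hU⟩ : 𝒰)))
    have : (f '' U)ᶜ ∈ g := hle (mem_principal_self _)
    exact (Ultrafilter.compl_mem_iff_notMem.1 this) hmem
  obtain ⟨x, hxy, u, hu, humap⟩ := hf g y hgy
  obtain ⟨U, hU𝒰, hxU⟩ := hcov (show x ∈ f ⁻¹' {y} from hxy)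
  have hUu : U ∈ u := hu ((hopen U hU𝒰).mem_nhds hxU)
  have : f '' U ∈ g := by
    rw [← humap]
    exact image_mem_map hUu
  exact hgU U hU𝒰 this

end Equiv

theorem liftsUltra_pi {ι : Type*} {X Y : ι → Type*} [∀ i, TopologicalSpace (X i)]
    [∀ i, TopologicalSpace (Y i)] (f : ∀ i, X i → Y i) (hf : ∀ i, LiftsUltra (f i)) :
    LiftsUltra (fun (p : ∀ i, X i) (i : ι) => f i (p i)) := by
  classical
  intro g y hg
  set F : (∀ i, X i) → ∀ i, Y i := fun p i => f i (p i) with hF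
  have hcoord : ∀ i, ∃ x : X i, f i x = y i ∧ ∃ u : Ultrafilter (X i),
      ↑u ≤ 𝓝 x ∧ Ultrafilter.map (f i) u = Ultrafilter.map (fun p => p i) g := by
    intro i
    apply hf i
    rw [Ultrafilter.coe_map]
    exact (map_mono hg).trans ((continuous_apply i).tendsto y)
  choose x hx u hu humap using hcoord
  have humap' : ∀ i, map (f i) ↑(u i) = map (fun p : ∀ j, Y j => p i) ↑g := by
    intro i
    rw [← Ultrafilter.coe_map, ← Ultrafilter.coe_map, humap i]
  have hG : (comap F ↑g ⊓ Filter.pi fun i => ↑(u i)).NeBot := by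
    rw [← forall_mem_nonempty_iff_neBot]
    intro s hs
    rw [mem_inf_iff] at hs
    obtain ⟨t, ht, w, hw, rfl⟩ := hs
    obtain ⟨B, hB, hBt⟩ := ht
    rw [Filter.mem_pi] at hw
    obtain ⟨I, hIfin, A, hA, hAw⟩ := hw
    have hmem : (B ∩ ⋂ i ∈ I, (fun p : ∀ j, Y j => p i) ⁻¹' (f i '' A i)) ∈ g := by
      apply inter_mem hB
      rw [(biInter_mem hIfin : _)]
      intro i _
      have h1 : f i '' A i ∈ map (f i) ↑(u i) := image_mem_map (hA i)
      rw [humap' i] at h1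
      exact h1
    obtain ⟨b, hbB, hbI⟩ := g.nonempty_of_mem hmem
    have hpt : ∀ i, ∃ a : X i, f i a = b i ∧ (i ∈ I → a ∈ A i) := by
      intro i
      by_cases hi : i ∈ I
      · have : b i ∈ f i '' A i := by
          simp only [Set.mem_iInter] at hbI
          exact hbI i hi
        obtain ⟨a, haA, hab⟩ := this
        exact ⟨a, hab, fun _ => haA⟩
      · obtain ⟨a, ha⟩ := (hf i).surjective (b i)
        exact ⟨a, ha, fun h => absurd h hi⟩
    choose p hp1 hp2 using hpt
    refine ⟨p, ?_, ?_⟩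
    · apply hBt
      have : F p = b := funext hp1
      simp only [Set.mem_preimage, this]
      exact hbB
    · exact hAw fun i hi => hp2 i hi
  obtain ⟨W, hW⟩ := Ultrafilter.exists_le (comap F ↑g ⊓ Filter.pi fun i => ↑(u i))
  refine ⟨x, funext hx, W, ?_, ?_⟩
  · rw [nhds_pi]
    exact (hW.trans inf_le_right).trans (pi_mono hu)
  · apply Ultrafilter.coe_injective
    apply g.unique
    rw [Ultrafilter.coe_map]
    exact map_le_iff_le_comap.2 (hW.trans inf_le_left)

theorem liftsUltra_prodMap {X₁ X₂ Y₁ Y₂ : Type*} [TopologicalSpace X₁] [TopologicalSpace X₂]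
    [TopologicalSpace Y₁] [TopologicalSpace Y₂]
    {f₁ : X₁ → Y₁} {f₂ : X₂ → Y₂} (hf₁ : LiftsUltra f₁) (hf₂ : LiftsUltra f₂) :
    LiftsUltra (Prod.map f₁ f₂) := by
  intro g y hg
  have h1 : ↑(Ultrafilter.map Prod.fst g) ≤ 𝓝 y.1 := by
    rw [Ultrafilter.coe_map]
    exact (map_mono hg).trans (continuous_fst.tendsto y)
  have h2 : ↑(Ultrafilter.map Prod.snd g) ≤ 𝓝 y.2 := by
    rw [Ultrafilter.coe_map]
    exact (map_mono hg).trans (continuous_snd.tendsto y)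
  obtain ⟨x₁, hx₁, u₁, hu₁, humap₁⟩ := hf₁ _ _ h1
  obtain ⟨x₂, hx₂, u₂, hu₂, humap₂⟩ := hf₂ _ _ h2
  have humap₁' : map f₁ ↑u₁ = map Prod.fst (↑g : Filter (Y₁ × Y₂)) := by
    rw [← Ultrafilter.coe_map, ← Ultrafilter.coe_map, humap₁]
  have humap₂' : map f₂ ↑u₂ = map Prod.snd (↑g : Filter (Y₁ × Y₂)) := by
    rw [← Ultrafilter.coe_map, ← Ultrafilter.coe_map, humap₂]
  have hG : (comap (Prod.map f₁ f₂) ↑g ⊓ ((↑u₁ : Filter X₁) ×ˢ (↑u₂ : Filter X₂))).NeBot := by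
    rw [← forall_mem_nonempty_iff_neBot]
    intro s hs
    rw [mem_inf_iff] at hs
    obtain ⟨t, ht, w, hw, rfl⟩ := hs
    obtain ⟨B, hB, hBt⟩ := ht
    rw [mem_prod_iff] at hw
    obtain ⟨A₁, hA₁, A₂, hA₂, hAw⟩ := hw
    have hmem : (B ∩ (Prod.fst ⁻¹' (f₁ '' A₁) ∩ Prod.snd ⁻¹' (f₂ '' A₂))) ∈ g := by
      apply inter_mem hB
      apply inter_mem
      · have h1 : f₁ '' A₁ ∈ map f₁ ↑u₁ := image_mem_map hA₁
        rw [humap₁'] at h1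
        exact h1
      · have h2 : f₂ '' A₂ ∈ map f₂ ↑u₂ := image_mem_map hA₂
        rw [humap₂'] at h2
        exact h2
    obtain ⟨b, hbB, hb1, hb2⟩ := g.nonempty_of_mem hmem
    obtain ⟨a₁, ha₁A, ha₁⟩ := hb1
    obtain ⟨a₂, ha₂A, ha₂⟩ := hb2
    refine ⟨(a₁, a₂), ?_, hAw ⟨ha₁A, ha₂A⟩⟩
    apply hBt
    show Prod.map f₁ f₂ (a₁, a₂) ∈ B
    simp only [Prod.map, ha₁, ha₂]
    exact hbB
  obtain ⟨W, hW⟩ := Ultrafilter.exists_le (comap (Prod.map f₁ f₂) (↑g : Filter (Y₁ × Y₂)) ⊓ ((↑u₁ : Filter X₁) ×ˢ (↑u₂ : Filter X₂)))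
  refine ⟨(x₁, x₂), ?_, W, ?_, ?_⟩
  · rw [Prod.ext_iff]
    exact ⟨hx₁, hx₂⟩
  · rw [nhds_prod_eq]
    exact (hW.trans inf_le_right).trans (prod_mono hu₁ hu₂)
  · apply Ultrafilter.coe_injective
    apply g.unique
    rw [Ultrafilter.coe_map]
    exact map_le_iff_le_comap.2 (hW.trans inf_le_left)

theorem stmt_1 {ι : Type*} {X Y : ι → Type*}
    [∀ i, TopologicalSpace (X i)] [∀ i, TopologicalSpace (Y i)]
    (f : ∀ i, X i → Y i) (hf : ∀ i, IsBiQuotient (f i))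
    {X₁ X₂ Y₁ Y₂ : Type*} [TopologicalSpace X₁] [TopologicalSpace X₂]
    [TopologicalSpace Y₁] [TopologicalSpace Y₂]
    (f₁ : X₁ → Y₁) (f₂ : X₂ → Y₂) (hf₁ : IsBiQuotient f₁) (hf₂ : IsBiQuotient f₂) :
    IsBiQuotient (fun (p : ∀ i, X i) (i : ι) => f i (p i)) ∧
      IsBiQuotient (Prod.map f₁ f₂) := by
  constructor
  · exact isBiQuotient_of_liftsUltra
      (liftsUltra_pi f fun i => liftsUltra_of_isBiQuotient (hf i))
  · exact isBiQuotient_of_liftsUltra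
      (liftsUltra_prodMap (liftsUltra_of_isBiQuotient hf₁) (liftsUltra_of_isBiQuotient hf₂))
end

section
/- If f₁ : X₁ → Y₁ and f₂ : X₂ → Y₂ are quotient maps, and X₁ and Y₁ × Y₂ are both Hausdorff k-spaces, then f₁ × f₂ : X₁ × X₂ → Y₁ × Y₂ is a quotient map. -/
open Topology Set Function

/-- Whitehead: a quotient map times the identity of a locally compact space is quotient. -/
lemma whitehead_left {X Y Z : Type*} [TopologicalSpace X] [TopologicalSpace Y]
    [TopologicalSpace Z] [LocallyCompactSpace Z] {f : X → Y} (hf : Topology.IsQuotientMap f) :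
    Topology.IsQuotientMap (Prod.map f (id : Z → Z)) := by
  simp_rw [Topology.isQuotientMap_iff, Topology.isCoinducing_iff, and_comm, iff_comm]
  refine ⟨hf.surjective.prodMap surjective_id, fun s =>
    ⟨fun hs => hs.preimage (hf.continuous.prodMap continuous_id), fun hs => ?_⟩⟩
  have key := @Topology.IsQuotientMap.continuous_lift_prod_left X Y Z (Y × Z) _ _ _
      (TopologicalSpace.coinduced (Prod.map f (id : Z → Z)) instTopologicalSpaceProd) _ f hf
      id (@continuous_coinduced_rng (X × Z) (Y × Z) (Prod.map f (id : Z → Z)) _)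
  exact @Continuous.isOpen_preimage (Y × Z) (Y × Z) _
      (TopologicalSpace.coinduced (Prod.map f (id : Z → Z)) instTopologicalSpaceProd) id key
      s (isOpen_coinduced.mpr hs)

lemma whitehead_right {X Y Z : Type*} [TopologicalSpace X] [TopologicalSpace Y]
    [TopologicalSpace Z] [LocallyCompactSpace Z] {f : X → Y} (hf : Topology.IsQuotientMap f) :
    Topology.IsQuotientMap (Prod.map (id : Z → Z) f) := by
  simp_rw [Topology.isQuotientMap_iff, Topology.isCoinducing_iff, and_comm, iff_comm]
  refine ⟨surjective_id.prodMap hf.surjective, fun s =>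
    ⟨fun hs => hs.preimage (continuous_id.prodMap hf.continuous), fun hs => ?_⟩⟩
  have key := @Topology.IsQuotientMap.continuous_lift_prod_right X Y Z (Z × Y) _ _ _
      (TopologicalSpace.coinduced (Prod.map (id : Z → Z) f) instTopologicalSpaceProd) _ f hf
      id (@continuous_coinduced_rng (Z × X) (Z × Y) (Prod.map (id : Z → Z) f) _)
  exact @Continuous.isOpen_preimage (Z × Y) (Z × Y) _
      (TopologicalSpace.coinduced (Prod.map (id : Z → Z) f) instTopologicalSpaceProd) id key
      s (isOpen_coinduced.mpr hs)

/-- Restriction of a quotient map over a closed set is quotient. -/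
lemma quotient_restrict {X Y : Type*} [TopologicalSpace X] [TopologicalSpace Y] {f : X → Y}
    (hf : Topology.IsQuotientMap f) {K : Set Y} (hK : IsClosed K) :
    Topology.IsQuotientMap (fun x : f ⁻¹' K => (⟨f x.1, x.2⟩ : K)) := by
  rw [Topology.isQuotientMap_iff_isClosed]
  constructor
  · rintro ⟨y, hy⟩
    obtain ⟨x, rfl⟩ := hf.surjective y
    exact ⟨⟨x, hy⟩, rfl⟩
  · intro s
    constructor
    · intro hs
      exact hs.preimage (Continuous.subtype_mk (hf.continuous.comp continuous_subtype_val) _)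
    · intro hs
      set D : Set Y := Subtype.val '' s with hD
      have hsD : s = Subtype.val ⁻¹' D := (preimage_image_eq s Subtype.val_injective).symm
      have hDK : D ⊆ K := by rintro y ⟨⟨y', hy'⟩, _, rfl⟩; exact hy'
      have h1 : (fun x : f ⁻¹' K => (⟨f x.1, x.2⟩ : K)) ⁻¹' s
          = Subtype.val ⁻¹' (f ⁻¹' D) := by
        ext x
        simp only [mem_preimage, hsD]
      rw [h1] at hs
      obtain ⟨t, ht, hts⟩ := isClosed_induced_iff.1 hs
      have h2 : f ⁻¹' D = t ∩ f ⁻¹' K := by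
        apply Set.ext
        intro x
        constructor
        · intro hx
          have hxK : x ∈ f ⁻¹' K := hDK hx
          have : (⟨x, hxK⟩ : f ⁻¹' K) ∈ Subtype.val ⁻¹' t := by
            rw [hts]; exact hx
          exact ⟨this, hxK⟩
        · rintro ⟨hxt, hxK⟩
          have : (⟨x, hxK⟩ : f ⁻¹' K) ∈ Subtype.val ⁻¹' (f ⁻¹' D) := by
            rw [← hts]; exact hxt
          exact this
      have hDclosed : IsClosed D := by
        rw [← hf.isClosed_preimage, h2]
        exact ht.inter (hK.preimage hf.continuous)
      rw [hsD]
      exact hDclosed.preimage continuous_subtype_val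

/-- A topological space `X` is a k-space if a set `A ⊆ X` is closed whenever `A ∩ K` is
closed in `K` for every compact `K ⊆ X`. -/
def IsKSpace (X : Type*) [TopologicalSpace X] : Prop :=
  ∀ A : Set X, (∀ K : Set X, IsCompact K → IsClosed ((fun k : K => (k : X)) ⁻¹' A)) →
    IsClosed A

/-- In the product of a k-space with a compact Hausdorff space, closedness is detected on
compact rectangles. -/
lemma kspace_prod_compact {X C : Type*} [TopologicalSpace X] [TopologicalSpace C]
    [CompactSpace C] [LocallyCompactSpace C] (hX : IsKSpace X) (A : Set (X × C))
    (h : ∀ Q : Set X, IsCompact Q →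
      IsClosed ((fun p : Q × C => ((p.1 : X), p.2)) ⁻¹' A)) :
    IsClosed A := by
  classical
  let I := {Q : Set X // IsCompact Q}
  let q : (Σ Q : I, Q.1) → X := fun p => p.2.1
  have hqcont : Continuous q := continuous_sigma fun i => continuous_subtype_val
  have hq : Topology.IsQuotientMap q := by
    rw [Topology.isQuotientMap_iff_isClosed]
    constructor
    · intro x
      exact ⟨⟨⟨{x}, isCompact_singleton⟩, ⟨x, rfl⟩⟩, rfl⟩
    · intro s
      refine ⟨fun hs => hs.preimage hqcont, fun hs => ?_⟩
      refine hX s fun K hK => ?_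
      exact isClosed_sigma_iff.1 hs ⟨K, hK⟩
  have hq2 : Topology.IsQuotientMap (Prod.map q (id : C → C)) := whitehead_left hq
  rw [← hq2.isClosed_preimage]
  let e : ((Σ Q : I, Q.1) × C) ≃ₜ (Σ Q : I, Q.1 × C) :=
    Homeomorph.sigmaProdDistrib
  rw [← e.symm.isClosed_preimage]
  rw [isClosed_sigma_iff]
  intro Q
  have : (Sigma.mk Q ⁻¹' (e.symm ⁻¹' (Prod.map q (id : C → C) ⁻¹' A)))
      = (fun p : Q.1 × C => ((p.1 : X), p.2)) ⁻¹' A := by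
    ext ⟨a, c⟩
    rfl
  rw [this]
  exact h Q.1 Q.2

theorem stmt_3 {X₁ X₂ Y₁ Y₂ : Type*} [TopologicalSpace X₁] [TopologicalSpace X₂]
    [TopologicalSpace Y₁] [TopologicalSpace Y₂]
    (f₁ : X₁ → Y₁) (f₂ : X₂ → Y₂)
    (hf₁ : Topology.IsQuotientMap f₁) (hf₂ : Topology.IsQuotientMap f₂)
    [T2Space X₁] (hX₁ : IsKSpace X₁)
    [T2Space (Y₁ × Y₂)] (hY : IsKSpace (Y₁ × Y₂)) :
    Topology.IsQuotientMap (Prod.map f₁ f₂) := by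
  rw [Topology.isQuotientMap_iff_isClosed]
  refine ⟨hf₁.surjective.prodMap hf₂.surjective, fun S =>
    ⟨fun hS => hS.preimage (hf₁.continuous.prodMap hf₂.continuous), fun hP => ?_⟩⟩
  by_cases hne : Nonempty Y₁
  case neg =>
    have : IsEmpty Y₁ := not_nonempty_iff.1 hne
    have : IsEmpty (Y₁ × Y₂) := inferInstance
    rw [Set.eq_empty_of_isEmpty S]
    exact isClosed_empty
  -- Y₂ is Hausdorff
  have hT2Y₂ : T2Space Y₂ := by
    obtain ⟨b⟩ := hne
    exact (isEmbedding_prodMkRight b (X := Y₁) (Y := Y₂)).t2Space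
  -- Main claim: closedness of S pulled back to Y₁ × K₂ for compact K₂
  have main : ∀ K₂ : Set Y₂, IsCompact K₂ →
      IsClosed ((fun p : Y₁ × K₂ => (p.1, (p.2 : Y₂))) ⁻¹' S) := by
    intro K₂ hK₂
    have hK₂c : IsClosed K₂ := hK₂.isClosed
    haveI : CompactSpace K₂ := isCompact_iff_compactSpace.1 hK₂
    -- P₂ ⊆ X₁ × K₂
    set P₂ : Set (X₁ × K₂) := (fun p : X₁ × K₂ => (f₁ p.1, (p.2 : Y₂))) ⁻¹' S with hP₂def
    have hP₂ : IsClosed P₂ := by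
      refine kspace_prod_compact hX₁ P₂ fun Q hQ => ?_
      haveI : CompactSpace Q := isCompact_iff_compactSpace.1 hQ
      -- restriction of f₂ over K₂
      have hf₂' : Topology.IsQuotientMap
          (fun x : f₂ ⁻¹' K₂ => (⟨f₂ x.1, x.2⟩ : K₂)) := quotient_restrict hf₂ hK₂c
      have hm : Topology.IsQuotientMap
          (Prod.map (id : Q → Q) (fun x : f₂ ⁻¹' K₂ => (⟨f₂ x.1, x.2⟩ : K₂))) :=
        whitehead_right hf₂'
      rw [← hm.isClosed_preimage]
      have : (Prod.map (id : Q → Q) (fun x : f₂ ⁻¹' K₂ => (⟨f₂ x.1, x.2⟩ : K₂))) ⁻¹'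
          ((fun p : Q × K₂ => ((p.1 : X₁), p.2)) ⁻¹' P₂)
          = (fun p : Q × f₂ ⁻¹' K₂ => (((p.1 : X₁)), ((p.2 : X₂)))) ⁻¹'
            (Prod.map f₁ f₂ ⁻¹' S) := by
        ext ⟨a, b⟩
        rfl
      rw [this]
      exact hP.preimage (by fun_prop)
    -- push forward along f₁ × id
    have hq : Topology.IsQuotientMap (Prod.map f₁ (id : K₂ → K₂)) := whitehead_left hf₁
    rw [← hq.isClosed_preimage]
    exact hP₂
  -- conclude via the k-space property of Y₁ × Y₂
  refine hY S fun K hK => ?_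
  set K₂ : Set Y₂ := Prod.snd '' K with hK₂def
  have hK₂ : IsCompact K₂ := hK.image continuous_snd
  have hg : Continuous (fun k : K => ((k : Y₁ × Y₂).1,
      (⟨(k : Y₁ × Y₂).2, ⟨(k : Y₁ × Y₂), k.2, rfl⟩⟩ : K₂))) := by
    fun_prop
  have : (fun k : K => (k : Y₁ × Y₂)) ⁻¹' S
      = (fun k : K => ((k : Y₁ × Y₂).1,
      (⟨(k : Y₁ × Y₂).2, ⟨(k : Y₁ × Y₂), k.2, rfl⟩⟩ : K₂))) ⁻¹' 
        ((fun p : Y₁ × K₂ => (p.1, (p.2 : Y₂))) ⁻¹' S) := by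
    ext k
    simp [mem_preimage]
  rw [this]
  exact (main K₂ hK₂).preimage hg
end

section
/- If f₁ : X₁ → Y₁ and f₂ : X₂ → Y₂ are quotient maps between topological spaces with X₁, X₂ metrizable and Y₁, Y₂ Hausdorff and first countable, then f₁ × f₂ is a quotient map. -/
open Filter Topology Set TopologicalSpace

/-- A quotient map onto a first countable Hausdorff space, with sequential domain,
is "countably biquotient" for monotone open covers of a fiber. -/
lemma aux_cbq {X Y : Type*} [TopologicalSpace X] [TopologicalSpace Y]
    [SequentialSpace X] [T2Space Y] [FirstCountableTopology Y]
    {f : X → Y} (hf : Topology.IsQuotientMap f) {l : Y} {U : ℕ → Set X}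
    (hUo : ∀ k, IsOpen (U k)) (hUm : Monotone U) (hUc : f ⁻¹' {l} ⊆ ⋃ k, U k) :
    ∃ k, f '' U k ∈ 𝓝 l := by
  by_contra h
  push_neg at h
  obtain ⟨V, hV⟩ := (𝓝 l).exists_antitone_basis
  have hsel : ∀ m, ∃ z, z ∈ V m ∧ z ∉ f '' U m := by
    intro m
    by_contra hc; push_neg at hc
    exact h m (mem_of_superset (hV.mem m) hc)
  choose y hyV hyU using hsel
  have hyl : Tendsto y atTop (𝓝 l) := hV.tendsto hyV
  obtain ⟨x₀, hx₀⟩ := hf.surjective l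
  obtain ⟨k₀, hk₀⟩ := mem_iUnion.1 (hUc (show f x₀ ∈ ({l} : Set Y) from hx₀))
  set A : Set Y := y '' Ici k₀ with hA
  have hlA : l ∉ A := by
    rintro ⟨m, hm, rfl⟩
    exact hyU m ⟨x₀, hUm hm hk₀, hx₀⟩
  have hclosed : IsSeqClosed (f ⁻¹' A) := by
    intro x p hxA hxp
    choose m hm hfm using fun i => hxA i
    by_cases hfin : ∃ a, ∃ᶠ i in atTop, m i = a
    · obtain ⟨a, ha⟩ := hfin
      obtain ⟨φ, hφ, hφa⟩ := Filter.extraction_of_frequently_atTop ha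
      have h1 : Tendsto (fun j => f (x (φ j))) atTop (𝓝 (f p)) :=
        (hf.continuous.tendsto p).comp (hxp.comp hφ.tendsto_atTop)
      have h2 : (fun j => f (x (φ j))) = fun _ => y a := by
        funext j
        rw [← hfm (φ j), hφa j]
      rw [h2] at h1
      have hpa : f p = y a := tendsto_nhds_unique h1 tendsto_const_nhds
      exact ⟨a, by rw [← hφa 0]; exact hm (φ 0), hpa.symm⟩
    · push_neg at hfin
      have hmto : Tendsto m atTop atTop := by
        refine tendsto_atTop.2 fun b => ?_
        have hev : ∀ᶠ i in atTop, ∀ a ∈ Finset.range b, m i ≠ a :=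
          (Finset.range b).eventually_all.2 fun a _ => hfin a
        filter_upwards [hev] with i hi
        by_contra hb; push_neg at hb
        exact hi (m i) (Finset.mem_range.2 hb) rfl
      have h1 : Tendsto (fun i => f (x i)) atTop (𝓝 (f p)) :=
        (hf.continuous.tendsto p).comp hxp
      have h2 : Tendsto (fun i => f (x i)) atTop (𝓝 l) := by
        have : (fun i => f (x i)) = fun i => y (m i) := by
          funext i; exact (hfm i).symm
        rw [this]
        exact hyl.comp hmto
      have hfp : f p = l := tendsto_nhds_unique h1 h2
      have hpmem : p ∈ f ⁻¹' {l} := hfp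
      obtain ⟨k, hk⟩ := mem_iUnion.1 (hUc hpmem)
      have hev1 : ∀ᶠ i in atTop, x i ∈ U k := hxp.eventually_mem ((hUo k).mem_nhds hk)
      have hev2 : ∀ᶠ i in atTop, k ≤ m i := hmto.eventually_ge_atTop k
      obtain ⟨i, h1i, h2i⟩ := (hev1.and hev2).exists
      exact (hyU (m i) ⟨x i, hUm h2i h1i, (hfm i).symm⟩).elim
  have hAopen : IsOpen Aᶜ := by
    rw [← hf.isOpen_preimage, preimage_compl]
    exact (hclosed.isClosed).isOpen_compl
  have hevA : ∀ᶠ M in atTop, y M ∈ Aᶜ := hyl.eventually_mem (hAopen.mem_nhds hlA)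
  obtain ⟨M, hM1, hM2⟩ := (hevA.and (eventually_ge_atTop k₀)).exists
  exact hM1 ⟨M, hM2, rfl⟩

/-- Quotient maps from first-countable sequential spaces onto first-countable Hausdorff
spaces are "sequentially quotient": any convergent sequence downstairs has a lift of a
subsequence converging to a point of the fiber. -/
lemma aux_seq_lift {X Y : Type*} [TopologicalSpace X] [TopologicalSpace Y]
    [FirstCountableTopology X] [SequentialSpace X] [T2Space Y] [FirstCountableTopology Y]
    {f : X → Y} (hf : Topology.IsQuotientMap f) {y : ℕ → Y} {l : Y}
    (hy : Tendsto y atTop (𝓝 l)) :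
    ∃ (p : X) (φ : ℕ → ℕ) (x : ℕ → X), f p = l ∧ Tendsto φ atTop atTop ∧
      (∀ k, f (x k) = y (φ k)) ∧ Tendsto x atTop (𝓝 p) := by
  by_contra hcon
  push_neg at hcon
  set T : ℕ → Set X := fun k => ⋃ n ∈ Ici k, f ⁻¹' {y n} with hT
  have key : ∀ p, f p = l → ∃ k, p ∉ closure (T k) := by
    intro p hp
    by_contra hcl; push_neg at hcl
    obtain ⟨W, hW⟩ := (𝓝 p).exists_antitone_basis
    have hsel : ∀ k, ∃ x, x ∈ W k ∧ x ∈ T k := by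
      intro k
      have := mem_closure_iff_nhds.1 (hcl k) (W k) (hW.mem k)
      exact ⟨this.some, this.some_mem.1, this.some_mem.2⟩
    choose x hxW hxT using hsel
    have hsel2 : ∀ k, ∃ n, k ≤ n ∧ f (x k) = y n := by
      intro k
      obtain ⟨n, hn, hxn⟩ := mem_iUnion₂.1 (hxT k)
      exact ⟨n, hn, hxn⟩
    choose φ hφ hfx using hsel2
    have hφt : Tendsto φ atTop atTop := tendsto_atTop_mono hφ tendsto_id
    have hxp : Tendsto x atTop (𝓝 p) := hW.tendsto hxW
    exact hcon p φ x hp hφt hfx hxp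
  set U : ℕ → Set X := fun j => (closure (T j))ᶜ with hU
  have hUo : ∀ j, IsOpen (U j) := fun j => isClosed_closure.isOpen_compl
  have hUm : Monotone U := by
    intro i j hij
    apply compl_subset_compl.2
    apply closure_mono
    exact iUnion₂_mono' fun n hn => ⟨n, le_trans hij hn, le_rfl⟩
  have hUc : f ⁻¹' {l} ⊆ ⋃ j, U j := by
    intro p hp
    obtain ⟨k, hk⟩ := key p hp
    exact mem_iUnion.2 ⟨k, hk⟩
  obtain ⟨j, hj⟩ := aux_cbq hf hUo hUm hUc
  have hev := (hy.eventually_mem hj).and (eventually_ge_atTop j)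
  obtain ⟨n, hn1, hn2⟩ := hev.exists
  obtain ⟨x, hxU, hfx⟩ := hn1
  exact hxU (subset_closure (mem_iUnion₂.2 ⟨n, hn2, hfx⟩))

theorem stmt_9 {X₁ X₂ Y₁ Y₂ : Type*} [TopologicalSpace X₁] [TopologicalSpace X₂]
    [TopologicalSpace Y₁] [TopologicalSpace Y₂]
    [TopologicalSpace.MetrizableSpace X₁] [TopologicalSpace.MetrizableSpace X₂]
    [T2Space Y₁] [FirstCountableTopology Y₁]
    [T2Space Y₂] [FirstCountableTopology Y₂]
    (f₁ : X₁ → Y₁) (f₂ : X₂ → Y₂)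
    (hf₁ : Topology.IsQuotientMap f₁) (hf₂ : Topology.IsQuotientMap f₂) :
    Topology.IsQuotientMap (Prod.map f₁ f₂) := by
  rw [Topology.isQuotientMap_iff, and_comm, isCoinducing_iff]
  refine ⟨hf₁.surjective.prodMap hf₂.surjective, fun s => Iff.comm.1 ?_⟩
  constructor
  · intro hs
    exact hs.preimage (hf₁.continuous.prodMap hf₂.continuous)
  · intro hs
    rw [← isClosed_compl_iff]
    apply IsSeqClosed.isClosed
    intro z w hz hzw
    by_contra hws
    simp only [mem_compl_iff, not_not] at hws
    have ha : Tendsto (fun n => (z n).1) atTop (𝓝 w.1) :=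
      (continuous_fst.tendsto w).comp hzw
    have hb : Tendsto (fun n => (z n).2) atTop (𝓝 w.2) :=
      (continuous_snd.tendsto w).comp hzw
    obtain ⟨p₁, φ, u, hp₁, hφ, hu, hup⟩ := aux_seq_lift hf₁ ha
    obtain ⟨p₂, ψ, v, hp₂, hψ, hv, hvp⟩ := aux_seq_lift hf₂ (hb.comp hφ)
    have hmem : (p₁, p₂) ∈ Prod.map f₁ f₂ ⁻¹' s := by
      simp only [mem_preimage, Prod.map_apply, hp₁, hp₂]
      exact hws
    have htend : Tendsto (fun j => (u (ψ j), v j)) atTop (𝓝 (p₁, p₂)) :=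
      ((hup.comp hψ).prodMk_nhds hvp)
    have hev := htend.eventually_mem (hs.mem_nhds hmem)
    obtain ⟨j, hj⟩ := hev.exists
    have : z (φ (ψ j)) ∈ s := by
      have h1 : f₁ (u (ψ j)) = (z (φ (ψ j))).1 := hu (ψ j)
      have h2 : f₂ (v j) = (z (φ (ψ j))).2 := hv j
      have : Prod.map f₁ f₂ (u (ψ j), v j) = z (φ (ψ j)) := by
        simp [Prod.map_apply, h1, h2]
      rwa [mem_preimage, this] at hj
    exact hz (φ (ψ j)) this
end

section
/- The space of homotopy classes rel endpoints of loops at x in X, topologized with basic open sets O(p, U) = {[p * α] : α a loop at x lying in U} for loops p and open neighborhoods U of x, is Hausdorff if and only if X is homotopically Hausdorff at x. -/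
variable {X : Type*} [TopologicalSpace X]

attribute [local instance] Path.Homotopic.setoid

open CategoryTheory

/-- A loop's homotopy class as an endomorphism in the fundamental groupoid. -/
private def m {x : X} (p : Path x x) : FundamentalGroupoid.mk x ⟶ FundamentalGroupoid.mk x := ⟦p⟧

private lemma comp_lift' {x : X} (p q : Path x x) : m (p.trans q) = m p ≫ m q :=
  rfl

private lemma inv_lift {x : X} (p : Path x x) : m p.symm = Groupoid.inv (m p) := rfl

private lemma m_inj {x : X} {p q : Path x x} (h : m p = m q) :
    (⟦p⟧ : Path.Homotopic.Quotient x x) = ⟦q⟧ := h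

private lemma m_eq {x : X} {p q : Path x x}
    (h : (⟦p⟧ : Path.Homotopic.Quotient x x) = ⟦q⟧) : m p = m q := h

private lemma refl_id {x : X} : m (Path.refl x) = 𝟙 (FundamentalGroupoid.mk x) := rfl

private lemma key1 {x : X} (p γ β : Path x x)
    (h : (⟦p.trans γ⟧ : Path.Homotopic.Quotient x x) = ⟦Path.refl x⟧) :
    (⟦p.trans (γ.trans β)⟧ : Path.Homotopic.Quotient x x) = ⟦β⟧ := by
  have h' : m p ≫ m γ = 𝟙 _ := by rw [← comp_lift']; exact m_eq h
  refine m_inj ?_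
  rw [comp_lift', comp_lift', ← Category.assoc, h', Category.id_comp]

private lemma key2 {x : X} (p q α β : Path x x)
    (h : (⟦p.trans α⟧ : Path.Homotopic.Quotient x x) = ⟦q.trans β⟧) :
    (⟦(q.symm).trans p⟧ : Path.Homotopic.Quotient x x) = ⟦β.trans α.symm⟧ := by
  have h' : m p ≫ m α = m q ≫ m β := by rw [← comp_lift', ← comp_lift']; exact m_eq h
  refine m_inj ?_
  rw [comp_lift', comp_lift', inv_lift, inv_lift]
  have := congrArg (fun f => Groupoid.inv (m q) ≫ f ≫ Groupoid.inv (m α)) h'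
  simpa [Category.assoc] using this

private lemma key3 {x : X} (p q : Path x x)
    (h : (⟦q.symm.trans p⟧ : Path.Homotopic.Quotient x x) = ⟦Path.refl x⟧) :
    (⟦p⟧ : Path.Homotopic.Quotient x x) = ⟦q⟧ := by
  have h' : Groupoid.inv (m q) ≫ m p = 𝟙 _ := by
    rw [← inv_lift, ← comp_lift']; exact m_eq h
  have := congrArg (fun f => m q ≫ f) h'
  refine m_inj ?_
  simpa using this

private lemma trans_refl_class {x : X} (p : Path x x) :
    (⟦p.trans (Path.refl x)⟧ : Path.Homotopic.Quotient x x) = ⟦p⟧ :=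
  Quotient.sound ⟨Path.Homotopy.transRefl p⟩

/-- The basic set `O(p, U)`: homotopy classes rel endpoints of loops of the form `p * α`
where `α` is a loop at `x` lying in `U`. -/
def basicSet {x : X} (p : Path x x) (U : Set X) : Set (Path.Homotopic.Quotient x x) :=
  { q | ∃ α : Path x x, Set.range α ⊆ U ∧ q = ⟦p.trans α⟧ }

/-- The topology on the set of homotopy classes rel endpoints of loops at `x`, generated by
the sets `O(p, U)` for loops `p` at `x` and open neighborhoods `U` of `x`. -/
def loopClassesTopology (x : X) : TopologicalSpace (Path.Homotopic.Quotient x x) :=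
  TopologicalSpace.generateFrom
    { S | ∃ (p : Path x x) (U : Set X), IsOpen U ∧ x ∈ U ∧ S = basicSet p U }

/-- `X` is homotopically Hausdorff at `x` if for every essential loop `α` based at `x` there
is an open neighborhood `U` of `x` such that `α` is not homotopic rel endpoints to any loop
lying entirely in `U`. -/
def HomotopicallyHausdorffAt (x : X) : Prop :=
  ∀ α : Path x x, (⟦α⟧ : Path.Homotopic.Quotient x x) ≠ ⟦Path.refl x⟧ →
    ∃ U : Set X, IsOpen U ∧ x ∈ U ∧
      ∀ β : Path x x, Set.range β ⊆ U → (⟦α⟧ : Path.Homotopic.Quotient x x) ≠ ⟦β⟧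

/-- If `V` is open in the loop-classes topology and contains the trivial class, then there is
an open neighborhood `U` of `x` such that every loop in `U` has its class in `V`. -/
private lemma absorbs {x : X} {V : Set (Path.Homotopic.Quotient x x)}
    (hV : TopologicalSpace.GenerateOpen
      { S | ∃ (p : Path x x) (U : Set X), IsOpen U ∧ x ∈ U ∧ S = basicSet p U } V)
    (hrefl : (⟦Path.refl x⟧ : Path.Homotopic.Quotient x x) ∈ V) :
    ∃ U : Set X, IsOpen U ∧ x ∈ U ∧
      ∀ β : Path x x, Set.range β ⊆ U → (⟦β⟧ : Path.Homotopic.Quotient x x) ∈ V := by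
  induction hV with
  | basic S hS =>
    obtain ⟨p, U, hU, hxU, rfl⟩ := hS
    obtain ⟨γ, hγU, hγ⟩ := hrefl
    exact ⟨U, hU, hxU, fun β hβ =>
      ⟨γ.trans β, by rw [Path.trans_range]; exact Set.union_subset hγU hβ,
        (key1 p γ β hγ.symm).symm⟩⟩
  | univ => exact ⟨Set.univ, isOpen_univ, trivial, fun _ _ => trivial⟩
  | inter s t _ _ ihs iht =>
    obtain ⟨U₁, hU₁, hx₁, h₁⟩ := ihs hrefl.1
    obtain ⟨U₂, hU₂, hx₂, h₂⟩ := iht hrefl.2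
    exact ⟨U₁ ∩ U₂, hU₁.inter hU₂, ⟨hx₁, hx₂⟩, fun β hβ =>
      ⟨h₁ β (hβ.trans Set.inter_subset_left), h₂ β (hβ.trans Set.inter_subset_right)⟩⟩
  | sUnion S _ ih =>
    obtain ⟨t, htS, ht⟩ := hrefl
    obtain ⟨U, hU, hx, h⟩ := ih t htS ht
    exact ⟨U, hU, hx, fun β hβ => ⟨t, htS, h β hβ⟩⟩

theorem stmt_15 (x : X) :
    @T2Space (Path.Homotopic.Quotient x x) (loopClassesTopology x) ↔
      HomotopicallyHausdorffAt x := by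
  constructor
  · intro hT2 α hα
    obtain ⟨V, W, hV, hW, hreflV, hαW, hdisj⟩ :=
      @t2_separation _ (loopClassesTopology x) hT2 _ _ (Ne.symm hα)
    obtain ⟨U, hU, hxU, h⟩ := absorbs hV hreflV
    refine ⟨U, hU, hxU, fun β hβ hαβ => ?_⟩
    exact hdisj.ne_of_mem (h β hβ) hαW (hαβ.symm)
  · intro hHH
    refine @T2Space.mk _ (loopClassesTopology x) fun a b hab => ?_
    induction a using Quotient.inductionOn with | h p => ?_
    induction b using Quotient.inductionOn with | h q => ?_
    have hne : (⟦q.symm.trans p⟧ : Path.Homotopic.Quotient x x) ≠ ⟦Path.refl x⟧ :=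
      fun h => hab (key3 p q h)
    obtain ⟨U, hU, hxU, h⟩ := hHH _ hne
    refine ⟨basicSet p U, basicSet q U,
      TopologicalSpace.GenerateOpen.basic _ ⟨p, U, hU, hxU, rfl⟩,
      TopologicalSpace.GenerateOpen.basic _ ⟨q, U, hU, hxU, rfl⟩,
      ⟨Path.refl x, by rw [Path.refl_range]; exact Set.singleton_subset_iff.2 hxU,
        (trans_refl_class p).symm⟩,
      ⟨Path.refl x, by rw [Path.refl_range]; exact Set.singleton_subset_iff.2 hxU,
        (trans_refl_class q).symm⟩, ?_⟩
    rw [Set.disjoint_left]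
    rintro c ⟨α, hαU, rfl⟩ ⟨β, hβU, hc⟩
    refine h (β.trans α.symm) ?_ (key2 p q α β hc)
    rw [Path.trans_range, Path.symm_range]
    exact Set.union_subset hβU hαU
end

section
/- Let X be a π₁-retract of Y via an embedding i : X → Y, where Y is locally path connected and semilocally simply connected. Then X is semilocally simply connected. -/
open CategoryTheory FundamentalGroupoid

universe u

/-- The homomorphism `f_* : π₁(X, x) → π₁(Y, f x)` induced by a continuous map `f`. -/
noncomputable def inducedHom {X Y : Type u} [TopologicalSpace X] [TopologicalSpace Y]
    (f : C(X, Y)) (x : X) : FundamentalGroup X x →* FundamentalGroup Y (f x) :=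
  Functor.mapEnd (⟨x⟩ : FundamentalGroupoid X)
    (fundamentalGroupoidFunctor.map (X := TopCat.of X) (Y := TopCat.of Y) (TopCat.ofHom f))

/-- Conjugation compatibility: the induced hom at a different basepoint is conjugate to the
induced hom at the original basepoint. -/
theorem inducedHom_conj {X Y : Type u} [TopologicalSpace X] [TopologicalSpace Y]
    (f : C(X, Y)) (x₀ x : X) (p : Path x₀ x) (g : FundamentalGroup X x₀) :
    inducedHom f x (Iso.conj
        ((Groupoid.isoEquivHom _ _).symm (⟦p⟧ : (⟨x₀⟩ : FundamentalGroupoid X) ⟶ ⟨x⟩)) g) =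
      Iso.conj
        ((fundamentalGroupoidFunctor.map (X := TopCat.of X) (Y := TopCat.of Y)
            (TopCat.ofHom f)).mapIso
          ((Groupoid.isoEquivHom _ _).symm (⟦p⟧ : (⟨x₀⟩ : FundamentalGroupoid X) ⟶ ⟨x⟩)))
        (inducedHom f x₀ g) :=
  Functor.map_conj (fundamentalGroupoidFunctor.map (X := TopCat.of X) (Y := TopCat.of Y)
    (TopCat.ofHom f)) _ g

theorem inducedHom_injective_of_injective {X Y : Type u} [TopologicalSpace X]
    [TopologicalSpace Y] [PathConnectedSpace X] (f : C(X, Y)) (x₀ x : X)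
    (h : Function.Injective (inducedHom f x₀)) :
    Function.Injective (inducedHom f x) := by
  classical
  obtain ⟨p⟩ : Nonempty (Path x₀ x) := ⟨PathConnectedSpace.somePath x₀ x⟩
  let e : (⟨x₀⟩ : FundamentalGroupoid X) ≅ ⟨x⟩ :=
    (Groupoid.isoEquivHom _ _).symm (⟦p⟧ : (⟨x₀⟩ : FundamentalGroupoid X) ⟶ ⟨x⟩)
  have key : ∀ g : FundamentalGroup X x,
      inducedHom f x g = Iso.conj
        ((fundamentalGroupoidFunctor.map (X := TopCat.of X) (Y := TopCat.of Y)
            (TopCat.ofHom f)).mapIso e)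
        (inducedHom f x₀ ((Iso.conj e).symm g)) := by
    intro g
    have := inducedHom_conj f x₀ x p ((Iso.conj e).symm g)
    rwa [MulEquiv.apply_symm_apply] at this
  intro a b hab
  rw [key a, key b] at hab
  have h1 := h ((Iso.conj _).injective hab)
  exact (Iso.conj e).symm.injective h1

/-- A π₁-retract of a locally path connected, semilocally simply connected space is
semilocally simply connected. -/
theorem stmt_16 {X Y : Type u} [TopologicalSpace X] [TopologicalSpace Y]
    [PathConnectedSpace X] [PathConnectedSpace Y] [LocallyPathConnectedSpace Y]
    (i : C(X, Y)) (hemb : Topology.IsEmbedding i)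
    (hY : ∀ y : Y, ∃ V ∈ nhds y, ∀ γ : Path y y, Set.range γ ⊆ V →
      Path.Homotopic γ (Path.refl y))
    (x₀ : X)
    (hret : ∃ r : FundamentalGroup Y (i x₀) →* FundamentalGroup X x₀,
      Function.Bijective (r.comp (inducedHom i x₀))) :
    ∀ x : X, ∃ U ∈ nhds x, ∀ γ : Path x x, Set.range γ ⊆ U →
      Path.Homotopic γ (Path.refl x) := by
  obtain ⟨r, hr⟩ := hret
  have hinj0 : Function.Injective (inducedHom i x₀) := fun a b hab => by
    apply hr.1
    simp only [MonoidHom.comp_apply, hab]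
  intro x
  have hinjx : Function.Injective (inducedHom i x) :=
    inducedHom_injective_of_injective i x₀ x hinj0
  obtain ⟨V, hV, hVloop⟩ := hY (i x)
  refine ⟨i ⁻¹' V, i.continuous.continuousAt.preimage_mem_nhds hV, ?_⟩
  intro γ hγ
  have hrange : Set.range (γ.map i.continuous) ⊆ V := by
    rintro y ⟨t, rfl⟩
    exact hγ (Set.mem_range_self t)
  have h1 : Path.Homotopic (γ.map i.continuous) (Path.refl (i x)) := hVloop _ hrange
  have h2 : inducedHom i x (FundamentalGroup.fromPath (X := TopCat.of X) ⟦γ⟧) = 1 := by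
    show (fundamentalGroupoidFunctor.map (X := TopCat.of X) (Y := TopCat.of Y)
      (TopCat.ofHom i)).map
      (⟦γ⟧ : (⟨x⟩ : FundamentalGroupoid (TopCat.of X)) ⟶ ⟨x⟩) = _
    exact Quotient.sound h1
  have h3 : FundamentalGroup.fromPath (X := TopCat.of X)
      (⟦γ⟧ : Path.Homotopic.Quotient x x) = 1 := hinjx (by rw [h2]; exact (map_one _).symm)
  have h4 : (⟦γ⟧ : Path.Homotopic.Quotient x x) = ⟦Path.refl x⟧ := h3
  exact Quotient.exact h4
end

section
/- Let q : X → G be a quotient map onto a group G with a topology, where X is second countable and G is Hausdorff and second countable, and let qᵢ : Xᵢ → Gᵢ (i ∈ I) be quotient maps with each Xᵢ second countable and each Gᵢ Hausdorff and second countable. Then the product map ∏ qᵢ : ∏ Xᵢ → ∏ Gᵢ is a quotient map. -/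
open Filter Set Topology

/-- Michael's theorem, ultrafilter form: a quotient map from a second countable space
onto a second countable Hausdorff space lifts convergent ultrafilters in the cluster sense. -/
theorem michael_key {X Y : Type*} [TopologicalSpace X] [TopologicalSpace Y]
    [SecondCountableTopology X] [SecondCountableTopology Y] [T2Space Y]
    {q : X → Y} (hq : Topology.IsQuotientMap q) (G : Ultrafilter Y) (y : Y)
    (hG : ↑G ≤ 𝓝 y) : ∃ x, q x = y ∧ (Filter.comap q ↑G ⊓ 𝓝 x).NeBot := by
  by_contra hcon
  push_neg at hcon
  -- every point of the fiber has an open neighborhood whose image is not in G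
  have hV : ∀ x : X, q x = y → ∃ V : Set X, IsOpen V ∧ x ∈ V ∧ q '' V ∉ G := by
    intro x hx
    have h := hcon x hx
    rw [inf_eq_bot_iff] at h
    obtain ⟨U, hU, Wt, hWt, hUW⟩ := h
    obtain ⟨A, hA, hAU⟩ := mem_comap.1 hU
    refine ⟨interior Wt, isOpen_interior, mem_interior_iff_mem_nhds.2 hWt, fun him => ?_⟩
    obtain ⟨z, hz₁, hz₂⟩ := Ultrafilter.nonempty_of_mem (G.inter_mem him hA)
    obtain ⟨w, hwW, rfl⟩ := hz₁
    have hw : w ∈ U ∩ Wt := ⟨hAU hz₂, interior_subset hwW⟩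
    rw [hUW] at hw
    exact hw
  choose V hVopen hVmem hVim using fun x : {x // q x = y} => hV x x.2
  -- the fiber is nonempty
  obtain ⟨x₀, hx₀⟩ := hq.surjective y
  set x₀' : {x // q x = y} := ⟨x₀, hx₀⟩
  -- countable subcover
  obtain ⟨T, hTc, hTU⟩ := TopologicalSpace.isOpen_iUnion_countable V hVopen
  obtain ⟨e, he⟩ := (hTc.insert x₀').exists_eq_range (insert_nonempty _ _)
  -- increasing open cover of the fiber, each containing x₀
  set W : ℕ → Set X := fun n => V x₀' ∪ ⋃ k ∈ Finset.range (n + 1), V (e k) with hWdef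
  have hWopen : ∀ n, IsOpen (W n) :=
    fun n => (hVopen _).union (isOpen_biUnion fun k _ => hVopen _)
  have hWmono : Monotone W := by
    intro m n hmn
    refine union_subset_union_right _ (iUnion₂_subset fun k hk => ?_)
    have hk' : k < n + 1 := lt_of_lt_of_le (Finset.mem_range.1 hk) (Nat.succ_le_succ hmn)
    exact fun x hx => mem_biUnion (Finset.mem_range.2 hk') hx
  have hWx₀ : ∀ n, x₀ ∈ W n := fun n => Or.inl (hVmem x₀')
  have hWcover : ∀ x : X, q x = y → ∃ n, x ∈ W n := by
    intro x hx
    have hxU : x ∈ ⋃ i, V i := mem_iUnion.2 ⟨⟨x, hx⟩, hVmem _⟩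
    rw [← hTU] at hxU
    obtain ⟨i, hiT, hxi⟩ := mem_iUnion₂.1 hxU
    have hi : i ∈ insert x₀' T := mem_insert_of_mem _ hiT
    rw [he] at hi
    obtain ⟨k, rfl⟩ := hi
    exact ⟨k, Or.inr (mem_biUnion (Finset.mem_range.2 (Nat.lt_succ_self k)) hxi)⟩
  -- images of the W n are not in G
  have hWim : ∀ n, q '' W n ∉ G := by
    intro n him
    rw [hWdef] at him
    simp only [image_union, image_iUnion] at him
    rcases Ultrafilter.union_mem_iff.1 him with h | h
    · exact hVim x₀' h
    · have h' : ⋃ i ∈ (↑(Finset.range (n + 1)) : Set ℕ), q '' V (e i) ∈ G := h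
      rw [Ultrafilter.finite_biUnion_mem_iff (Finset.range (n + 1)).finite_toSet] at h'
      obtain ⟨k, _, hk⟩ := h'
      exact hVim (e k) hk
  -- y is not in the interior of any q '' W n; choose points converging to y outside
  have hyint : ∀ n, y ∈ closure (q '' W n)ᶜ := by
    intro n
    rw [closure_compl]
    intro hy
    exact hWim n (hG (mem_interior_iff_mem_nhds.1 hy))
  obtain ⟨B, hB⟩ := (𝓝 y).exists_antitone_basis
  have hyn : ∀ n, ∃ z, z ∈ B n ∧ z ∉ q '' W n := by
    intro n
    obtain ⟨z, hz₁, hz₂⟩ := mem_closure_iff_nhds.1 (hyint n) (B n) (hB.mem n)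
    exact ⟨z, hz₁, hz₂⟩
  choose yn hynB hynW using hyn
  have hyntend : Tendsto yn atTop (𝓝 y) := hB.tendsto hynB
  have hyW : ∀ n, y ∈ q '' W n := fun n => ⟨x₀, hWx₀ n, hx₀⟩
  have hyny : ∀ n, yn n ≠ y := fun n h => hynW n (h ▸ hyW n)
  set A : Set Y := range yn with hAdef
  have hyA : y ∉ A := fun ⟨n, hn⟩ => hyny n hn
  have hycl : y ∈ closure A :=
    mem_closure_of_tendsto hyntend (Eventually.of_forall fun n => mem_range_self n)
  have hclA : closure A ⊆ insert y A :=
    closure_minimal (subset_insert _ _) hyntend.isCompact_insert_range.isClosed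
  -- A is not closed, so q ⁻¹' A is not closed
  have hAnotclosed : ¬ IsClosed A := fun h => hyA (h.closure_subset hycl)
  have hpre : ¬ IsClosed (q ⁻¹' A) := fun h => hAnotclosed (hq.isClosed_preimage.1 h)
  have hx : ∃ x, x ∈ closure (q ⁻¹' A) ∧ x ∉ q ⁻¹' A := by
    by_contra h
    push_neg at h
    exact hpre (isClosed_of_closure_subset h)
  obtain ⟨x, hxcl, hxA⟩ := hx
  -- q x = y
  have hqx : q x ∈ closure A := by
    have h1 : q x ∈ q '' closure (q ⁻¹' A) := mem_image_of_mem q hxcl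
    have h2 : q '' closure (q ⁻¹' A) ⊆ closure (q '' (q ⁻¹' A)) :=
      image_closure_subset_closure_image hq.continuous
    exact closure_mono (image_preimage_subset q A) (h2 h1)
  have hqxy : q x = y := by
    rcases hclA hqx with h | h
    · exact h
    · exact absurd h hxA
  -- derive the contradiction
  obtain ⟨n, hxn⟩ := hWcover x hqxy
  set N : Set X := W n \ q ⁻¹' (yn '' Iio n) with hNdef
  have hNopen : IsOpen N :=
    (hWopen n).sdiff (((finite_Iio n).image yn).isClosed.preimage hq.continuous)
  have hxN : x ∈ N := ⟨hxn, fun hmem => by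
    obtain ⟨m, _, hm⟩ := hmem
    exact hxA ⟨m, hm⟩⟩
  have hNA : N ∩ q ⁻¹' A = ∅ := by
    apply eq_empty_of_forall_notMem
    rintro z ⟨⟨hzW, hzn⟩, m, hm⟩
    by_cases hmn : m < n
    · exact hzn ⟨m, hmn, hm⟩
    · push_neg at hmn
      exact hynW m ⟨z, hWmono hmn hzW, hm.symm⟩
  have hne := mem_closure_iff.1 hxcl N hNopen hxN
  rw [hNA] at hne
  exact not_nonempty_empty hne

theorem stmt_17 {X G : Type*} [TopologicalSpace X]
    [SecondCountableTopology X]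
    [Group G] [TopologicalSpace G] [T2Space G]
    [SecondCountableTopology G]
    (q : X → G) (hq : Topology.IsQuotientMap q)
    {ι : Type*} {Xi : ι → Type*} {Gi : ι → Type*}
    [∀ i, TopologicalSpace (Xi i)] [∀ i, SecondCountableTopology (Xi i)]
    [∀ i, Group (Gi i)] [∀ i, TopologicalSpace (Gi i)] [∀ i, T2Space (Gi i)]
    [∀ i, SecondCountableTopology (Gi i)]
    (qi : ∀ i, Xi i → Gi i) (hqi : ∀ i, Topology.IsQuotientMap (qi i)) :
    Topology.IsQuotientMap (fun (p : ∀ i, Xi i) (i : ι) => qi i (p i)) := by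
  set Q : (∀ i, Xi i) → ∀ i, Gi i := fun p i => qi i (p i) with hQdef
  have hQsurj : Function.Surjective Q := by
    intro g
    choose p hp using fun i => (hqi i).surjective (g i)
    exact ⟨p, funext hp⟩
  have hQcont : Continuous Q :=
    continuous_pi fun i => (hqi i).continuous.comp (continuous_apply i)
  simp_rw [Topology.isQuotientMap_iff, Topology.isCoinducing_iff, and_comm, iff_comm]
  refine ⟨hQsurj, fun s => ⟨fun hs => hs.preimage hQcont, fun hs => ?_⟩⟩
  rw [isOpen_iff_mem_nhds]
  intro g hg
  by_contra hns
  -- take an ultrafilter refining 𝓝 g ⊓ 𝓟 sᶜ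
  have hne : (𝓝 g ⊓ 𝓟 sᶜ).NeBot := by
    rw [inf_principal_neBot_iff]
    intro U hU
    by_contra hUc
    rw [not_nonempty_iff_eq_empty] at hUc
    apply hns
    apply mem_of_superset hU
    intro z hz
    by_contra hzs
    exact eq_empty_iff_forall_notMem.1 hUc z ⟨hz, hzs⟩
  obtain ⟨F, hF⟩ := Filter.exists_ultrafilter_le (𝓝 g ⊓ 𝓟 sᶜ)
  have hFnhds : ↑F ≤ 𝓝 g := hF.trans inf_le_left
  have hFs : sᶜ ∈ F := hF (le_principal_iff.1 inf_le_right : sᶜ ∈ 𝓝 g ⊓ 𝓟 sᶜ)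
  -- componentwise ultrafilters and Michael lifts
  have hcomp : ∀ i, ↑(F.map (fun p : ∀ j, Gi j => p i)) ≤ 𝓝 (g i) :=
    fun i => (Filter.map_mono hFnhds).trans (continuous_apply i).continuousAt
  have hkey := fun i => michael_key (hqi i) (F.map (fun p : ∀ j, Gi j => p i)) (g i) (hcomp i)
  choose x hxq hxcl using hkey
  -- the cluster point lifts to the product
  have hmain : (Filter.comap Q ↑F ⊓ 𝓝 (fun i => x i)).NeBot := by
    constructor
    intro hbot
    rw [inf_eq_bot_iff] at hbot
    obtain ⟨U, hU, Wt, hWt, hUW⟩ := hbot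
    obtain ⟨A, hA, hAU⟩ := mem_comap.1 hU
    rw [nhds_pi, Filter.mem_pi] at hWt
    obtain ⟨I, hIfin, Vs, hVs, hVsub⟩ := hWt
    -- each qi i '' Vs i belongs to the i-th component ultrafilter
    have himg : ∀ i ∈ I, (fun p : ∀ j, Gi j => p i) ⁻¹' (qi i '' Vs i) ∈ F := by
      intro i _
      have hmem : qi i '' Vs i ∈ F.map (fun p : ∀ j, Gi j => p i) := by
        by_contra hnot
        rw [← Ultrafilter.compl_mem_iff_notMem] at hnot
        have hV' : qi i ⁻¹' (qi i '' Vs i)ᶜ ∈ Filter.comap (qi i) ↑(F.map (fun p : ∀ j, Gi j => p i)) :=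
          Filter.preimage_mem_comap hnot
        have := (hxcl i).ne
        apply this
        rw [inf_eq_bot_iff]
        refine ⟨_, hV', Vs i, hVs i, ?_⟩
        apply eq_empty_of_forall_notMem
        rintro z ⟨hz₁, hz₂⟩
        exact hz₁ (mem_image_of_mem _ hz₂)
      exact hmem
    -- find a point of A with all needed coordinates in the images
    have hAI : A ∩ ⋂ i ∈ I, (fun p : ∀ j, Gi j => p i) ⁻¹' (qi i '' Vs i) ∈ F :=
      F.inter_mem hA ((biInter_mem hIfin).2 himg)
    obtain ⟨a, haA, haI⟩ := Ultrafilter.nonempty_of_mem hAI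
    -- build a preimage point
    have hchoice : ∀ i, ∃ z : Xi i, qi i z = a i ∧ (i ∈ I → z ∈ Vs i) := by
      intro i
      by_cases hiI : i ∈ I
      · obtain ⟨z, hz₁, hz₂⟩ := mem_iInter₂.1 haI i hiI
        exact ⟨z, hz₂, fun _ => hz₁⟩
      · obtain ⟨z, hz⟩ := (hqi i).surjective (a i)
        exact ⟨z, hz, fun h => absurd h hiI⟩
    choose p hp₁ hp₂ using hchoice
    have hpU : p ∈ U := hAU (by simpa [hQdef, funext hp₁] using haA)
    have hpW : p ∈ Wt := hVsub fun i hi => hp₂ i hi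
    have : p ∈ U ∩ Wt := ⟨hpU, hpW⟩
    rw [hUW] at this
    exact this
  -- contradiction: Q ⁻¹' s is an open neighborhood of x, but sᶜ ∈ F
  have hxs : (fun i => x i) ∈ Q ⁻¹' s := by
    have : Q (fun i => x i) = g := funext fun i => hxq i
    simp [this, hg]
  have h₁ : Q ⁻¹' s ∈ 𝓝 (fun i => x i) := hs.mem_nhds hxs
  have h₂ : Q ⁻¹' sᶜ ∈ Filter.comap Q ↑F := Filter.preimage_mem_comap hFs
  have := hmain.ne
  apply this
  rw [inf_eq_bot_iff]
  refine ⟨Q ⁻¹' sᶜ, h₂, Q ⁻¹' s, h₁, ?_⟩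
  apply eq_empty_of_forall_notMem
  rintro z ⟨hz₁, hz₂⟩
  exact hz₁ hz₂
end
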